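/- arXiv:2401.17595 — 2 statements merged into one kernel-verified Lean document; each statement's English description precedes it below -/
import Mathlib

section
/- In the setting of the bivariate normal example, the counterfactual error V_x := Φ((U − (σ_UX/σ_X²)x)/σ_{U|X}) satisfies P(V_x ≤ v | X = x̃) = Φ((σ_UX/σ_X²)(x − x̃)/σ_{U|X} + Φ^{−1}(v)), so V_x is not independent of X when σ_UX ≠ 0 and x̃ ≠ x; moreover its unconditional CDF is F_{V_x}(v) = Φ((σ_UX/σ_X²)x + σ_{U|X}Φ^{−1}(v)). -/
open MeasureTheory ProbabilityTheory Set Real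
open scoped NNReal ENNReal

lemma pdf_mul_eq (k u s : ℝ) :
    gaussianPDFReal 0 1 s * gaussianPDFReal 0 1 (u - k * s)
      = gaussianPDFReal 0 (1 + k ^ 2).toNNReal u
        * gaussianPDFReal (k * u / (1 + k ^ 2)) ((1 + k ^ 2)⁻¹).toNNReal s := by
  have hk : (0:ℝ) < 1 + k ^ 2 := by positivity
  simp only [gaussianPDFReal, Real.coe_toNNReal _ hk.le,
    Real.coe_toNNReal _ (inv_nonneg.mpr hk.le), NNReal.coe_one, sub_zero]
  rw [mul_mul_mul_comm, mul_mul_mul_comm (√(2 * π * (1 + k ^ 2)))⁻¹]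
  congr 1
  · rw [← mul_inv, ← mul_inv, ← Real.sqrt_mul (by positivity), ← Real.sqrt_mul (by positivity)]
    congr 2
    field_simp
  · rw [← Real.exp_add, ← Real.exp_add]
    congr 1
    field_simp
    ring

lemma gaussian_conv (k c : ℝ) :
    ((gaussianReal 0 1).prod (gaussianReal 0 1)) {p : ℝ × ℝ | k * p.1 + p.2 ≤ c}
      = gaussianReal 0 (1 + k ^ 2).toNNReal (Iic c) := by
  have hk : (0:ℝ) < 1 + k ^ 2 := by positivity
  have hv1 : ((1 + k ^ 2).toNNReal : ℝ≥0) ≠ 0 :=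
    ne_of_gt (Real.toNNReal_pos.mpr hk)
  have hv2 : (((1 + k ^ 2)⁻¹).toNNReal : ℝ≥0) ≠ 0 :=
    ne_of_gt (Real.toNNReal_pos.mpr (by positivity))
  have hE : MeasurableSet {p : ℝ × ℝ | k * p.1 + p.2 ≤ c} :=
    measurableSet_le ((measurable_fst.const_mul k).add measurable_snd) measurable_const
  have hγ : gaussianReal 0 1 = volume.withDensity (gaussianPDF 0 1) :=
    gaussianReal_of_var_ne_zero 0 one_ne_zero
  have htrans : ∀ s : ℝ, (gaussianReal 0 1) (Iic (c - k * s))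
      = ∫⁻ u in Iic c, gaussianPDF 0 1 (u - k * s) := by
    intro s
    rw [gaussianReal_apply 0 one_ne_zero]
    have h := setLIntegral_map (μ := volume) (s := Iic c)
      (f := fun u => gaussianPDF 0 1 (u - k * s))
      (g := fun x => x + k * s) measurableSet_Iic
      ((measurable_gaussianPDF 0 1).comp (measurable_id.sub_const (k * s)))
      (measurable_add_const (k * s))
    rw [map_add_right_eq_self volume (k * s)] at h
    rw [h]
    have hpre : (fun x : ℝ => x + k * s) ⁻¹' Iic c = Iic (c - k * s) := by
      ext y; simp [le_sub_iff_add_le]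
    rw [hpre]
    simp only [add_sub_cancel_right]
  have hmono_meas : Measurable fun y : ℝ => (gaussianReal 0 1) (Iic y) :=
    Monotone.measurable fun a b hab => measure_mono (Iic_subset_Iic.mpr hab)
  have hg : Measurable fun s : ℝ => (gaussianReal 0 1) (Iic (c - k * s)) :=
    hmono_meas.comp (measurable_const.sub (measurable_id.const_mul k))
  have hslice : ∀ s : ℝ, (Prod.mk s ⁻¹' {p : ℝ × ℝ | k * p.1 + p.2 ≤ c}) = Iic (c - k * s) := by
    intro s; ext e
    simp only [mem_preimage, mem_setOf_eq, mem_Iic]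
    constructor <;> intro h <;> linarith
  rw [Measure.prod_apply hE]
  simp_rw [hslice, htrans]
  conv_lhs => rw [hγ]
  have hg' : Measurable fun s : ℝ => ∫⁻ u in Iic c, gaussianPDF 0 1 (u - k * s) := by
    simp_rw [← htrans]; exact hg
  rw [lintegral_withDensity_eq_lintegral_mul _ (measurable_gaussianPDF 0 1) hg']
  have key : ∀ s : ℝ, gaussianPDF 0 1 s * (∫⁻ u in Iic c, gaussianPDF 0 1 (u - k * s))
      = ∫⁻ u in Iic c, gaussianPDF 0 1 s * gaussianPDF 0 1 (u - k * s) := fun s =>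
    (lintegral_const_mul _ ((measurable_gaussianPDF 0 1).comp (measurable_id.sub_const _))).symm
  simp only [Pi.mul_apply]
  simp_rw [key]
  rw [lintegral_lintegral_swap (by
    exact (((measurable_gaussianPDF 0 1).comp measurable_fst).mul
      ((measurable_gaussianPDF 0 1).comp
        (measurable_snd.sub (measurable_fst.const_mul k)))).aemeasurable)]
  have inner : ∀ u : ℝ, (∫⁻ s, gaussianPDF 0 1 s * gaussianPDF 0 1 (u - k * s))
      = gaussianPDF 0 (1 + k ^ 2).toNNReal u := by
    intro u
    have h1 : ∀ s : ℝ, gaussianPDF 0 1 s * gaussianPDF 0 1 (u - k * s)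
        = ENNReal.ofReal (gaussianPDFReal 0 (1 + k ^ 2).toNNReal u
            * gaussianPDFReal (k * u / (1 + k ^ 2)) ((1 + k ^ 2)⁻¹).toNNReal s) := by
      intro s
      rw [gaussianPDF, gaussianPDF, ← ENNReal.ofReal_mul (gaussianPDFReal_nonneg _ _ _),
        pdf_mul_eq]
    simp_rw [h1]
    rw [← ofReal_integral_eq_lintegral_ofReal
      ((integrable_gaussianPDFReal _ _).const_mul _)
      (ae_of_all _ fun s => mul_nonneg (gaussianPDFReal_nonneg _ _ _)
        (gaussianPDFReal_nonneg _ _ _))]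
    rw [integral_const_mul, integral_gaussianPDFReal_eq_one _ hv2, mul_one, gaussianPDF]
  simp_rw [inner]
  rw [gaussianReal_apply 0 hv1]

lemma Phi_strictMono : StrictMono fun u : ℝ => ((gaussianReal 0 1) (Iic u)).toReal := by
  intro u u' h
  have hne : (gaussianReal 0 1) (Ioc u u') ≠ 0 := by
    intro h0
    have hv := (gaussianReal_absolutelyContinuous' 0 one_ne_zero) h0
    rw [Real.volume_Ioc] at hv
    rw [ENNReal.ofReal_eq_zero] at hv
    linarith
  have h1 : (gaussianReal 0 1) (Iic u) < (gaussianReal 0 1) (Iic u') := by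
    calc (gaussianReal 0 1) (Iic u)
        < (gaussianReal 0 1) (Iic u) + (gaussianReal 0 1) (Ioc u u') :=
          ENNReal.lt_add_right (measure_ne_top _ _) hne
      _ = (gaussianReal 0 1) (Iic u') := by
          rw [← measure_union (Iic_disjoint_Ioc le_rfl) measurableSet_Ioc,
            Iic_union_Ioc_eq_Iic h.le]
  exact (ENNReal.toReal_lt_toReal (measure_ne_top _ _) (measure_ne_top _ _)).mpr h1



open MeasureTheory ProbabilityTheory Set

/-- In the bivariate normal example (encoded via the exact representation
`U = a·X + σc·ε`, `a = σUX/σX²`, `ε ~ N(0,1)` independent of `X ~ N(0, σX²)`,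
`σc = √(1 − σUX²/σX²)`), the counterfactual error `Vx = Φ((U − a·x)/σc)` satisfies
`P(Vx ≤ v | X = x̃) = Φ(a(x − x̃)/σc + Φ⁻¹(v))` (stated in integrated form over the law of
`X`), so `Vx` is not independent of `X` when `σUX ≠ 0` and `x̃ ≠ x` (the conditional CDF
differs from `v`); moreover the unconditional CDF is `F_{Vx}(v) = Φ(a·x + σc·Φ⁻¹(v))`.
Here `q = Φ⁻¹(v)`, i.e. `Φ q = v` with `v ∈ (0,1)`. -/
theorem stmt7 {Ω : Type*} [MeasurableSpace Ω] (μ : Measure Ω) [IsProbabilityMeasure μ]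
    (U X ε : Ω → ℝ) (σX σUX : ℝ) (hσX : 0 < σX) (hσ : 0 < |σUX| ∧ |σUX| < σX)
    (hXmeas : Measurable X) (hεmeas : Measurable ε)
    (hXlaw : Measure.map X μ = gaussianReal 0 ((σX ^ 2).toNNReal))
    (hεlaw : Measure.map ε μ = gaussianReal 0 1)
    (hindep : IndepFun X ε μ)
    (σc : ℝ) (hσc : σc = Real.sqrt (1 - σUX ^ 2 / σX ^ 2))
    (hU : ∀ ω, U ω = (σUX / σX ^ 2) * X ω + σc * ε ω)
    (Φ : ℝ → ℝ) (hΦ : ∀ u, Φ u = ((gaussianReal 0 1) (Iic u)).toReal)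
    (x : ℝ) (Vx : Ω → ℝ)
    (hVx : ∀ ω, Vx ω = Φ ((U ω - (σUX / σX ^ 2) * x) / σc))
    (v q : ℝ) (hv : v ∈ Ioo (0:ℝ) 1) (hq : Φ q = v) :
    -- conditional CDF of `Vx` given `X`:
    (∀ s : Set ℝ, MeasurableSet s →
      (μ {ω | Vx ω ≤ v ∧ X ω ∈ s}).toReal
        = ∫ t in s, Φ ((σUX / σX ^ 2) * (x - t) / σc + q) ∂(Measure.map X μ)) ∧
    -- hence `Vx` is not independent of `X`: the conditional CDF depends on `x̃ ≠ x`
    (∀ xt : ℝ, xt ≠ x → Φ ((σUX / σX ^ 2) * (x - xt) / σc + q) ≠ v) ∧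
    -- unconditional CDF of `Vx`:
    μ {ω | Vx ω ≤ v} = ENNReal.ofReal (Φ ((σUX / σX ^ 2) * x + σc * q)) := by
  obtain ⟨hσ1, hσ2⟩ := hσ
  have hσX2 : (0:ℝ) < σX ^ 2 := by positivity
  have hlt : σUX ^ 2 < σX ^ 2 := by nlinarith [sq_abs σUX, abs_nonneg σUX]
  have hσc2pos : (0:ℝ) < 1 - σUX ^ 2 / σX ^ 2 := by
    rw [sub_pos, div_lt_one hσX2]; exact hlt
  have hσcpos : 0 < σc := hσc ▸ Real.sqrt_pos.mpr hσc2pos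
  have hσcsq : σc ^ 2 = 1 - σUX ^ 2 / σX ^ 2 := by rw [hσc, Real.sq_sqrt hσc2pos.le]
  set a : ℝ := σUX / σX ^ 2 with ha
  have hΦmono : StrictMono Φ := by
    intro u u' h
    rw [hΦ, hΦ]
    exact Phi_strictMono h
  have hΦle : ∀ t : ℝ, (Φ t ≤ v ↔ t ≤ q) := by
    intro t; rw [← hq, hΦmono.le_iff_le]
  have hVle : ∀ ω, (Vx ω ≤ v ↔ ε ω ≤ a * (x - X ω) / σc + q) := by
    intro ω
    have harg : (U ω - a * x) / σc = a * (X ω - x) / σc + ε ω := by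
      rw [hU ω]; field_simp; ring
    have hneg : a * (x - X ω) / σc = -(a * (X ω - x) / σc) := by ring
    rw [hVx ω, harg, hΦle]
    constructor <;> intro h <;> [skip; skip] <;> linarith [hneg]
  have hgmeas : Measurable fun t : ℝ => a * (x - t) / σc + q := by fun_prop
  have hjoint : Measure.map (fun ω => (X ω, ε ω)) μ
      = (Measure.map X μ).prod (Measure.map ε μ) :=
    (indepFun_iff_map_prod_eq_prod_map_map hXmeas.aemeasurable hεmeas.aemeasurable).mp hindep
  have hpairmeas : Measurable fun ω => (X ω, ε ω) := hXmeas.prodMk hεmeas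
  have hmono_meas : Measurable fun y : ℝ => (gaussianReal 0 1) (Iic y) :=
    Monotone.measurable fun b b' hbb' => measure_mono (Iic_subset_Iic.mpr hbb')
  have hkey : ∀ s : Set ℝ, MeasurableSet s → μ {ω | Vx ω ≤ v ∧ X ω ∈ s}
      = ∫⁻ t in s, (gaussianReal 0 1) (Iic (a * (x - t) / σc + q)) ∂(Measure.map X μ) := by
    intro s hs
    have hset : {ω | Vx ω ≤ v ∧ X ω ∈ s}
        = (fun ω => (X ω, ε ω)) ⁻¹' {p : ℝ × ℝ | p.2 ≤ a * (x - p.1) / σc + q ∧ p.1 ∈ s} := by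
      ext ω
      simp only [mem_setOf_eq, mem_preimage]
      rw [hVle ω]
    have hEmeas : MeasurableSet {p : ℝ × ℝ | p.2 ≤ a * (x - p.1) / σc + q ∧ p.1 ∈ s} :=
      (measurableSet_le measurable_snd (hgmeas.comp measurable_fst)).inter
        (measurable_fst hs)
    rw [hset, ← Measure.map_apply hpairmeas hEmeas, hjoint, hεlaw, Measure.prod_apply hEmeas]
    have hsl : ∀ t : ℝ, (gaussianReal 0 1)
        (Prod.mk t ⁻¹' {p : ℝ × ℝ | p.2 ≤ a * (x - p.1) / σc + q ∧ p.1 ∈ s})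
        = s.indicator (fun t => (gaussianReal 0 1) (Iic (a * (x - t) / σc + q))) t := by
      intro t
      by_cases hts : t ∈ s
      · rw [indicator_of_mem hts]
        congr 1
        ext e; simp [hts]
      · rw [indicator_of_notMem hts]
        have : (Prod.mk t ⁻¹' {p : ℝ × ℝ | p.2 ≤ a * (x - p.1) / σc + q ∧ p.1 ∈ s})
            = (∅ : Set ℝ) := by
          ext e; simp [hts]
        rw [this, measure_empty]
    simp_rw [hsl]
    rw [lintegral_indicator hs]
  refine ⟨?_, ?_, ?_⟩
  · -- part 1
    intro s hs
    rw [hkey s hs]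
    simp only [hΦ]
    exact (integral_toReal ((hmono_meas.comp hgmeas).aemeasurable.restrict)
      (ae_of_all _ fun t => measure_lt_top _ _)).symm
  · -- part 2
    intro xt hxt hcontra
    rw [← hq] at hcontra
    have h0 := hΦmono.injective hcontra
    have hD : a * (x - xt) / σc ≠ 0 :=
      div_ne_zero (mul_ne_zero (div_ne_zero (abs_pos.mp hσ1) (ne_of_gt hσX2))
        (sub_ne_zero.mpr (Ne.symm hxt))) (ne_of_gt hσcpos)
    apply hD
    linarith [h0]
  · -- part 3
    set k : ℝ := a * σX / σc with hk
    set c : ℝ := a * x / σc + q with hc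
    have hset : {ω | Vx ω ≤ v}
        = (fun ω => (X ω, ε ω)) ⁻¹' {p : ℝ × ℝ | p.2 ≤ a * (x - p.1) / σc + q} := by
      ext ω; simp only [mem_setOf_eq, mem_preimage]; exact hVle ω
    have hEmeas : MeasurableSet {p : ℝ × ℝ | p.2 ≤ a * (x - p.1) / σc + q} :=
      measurableSet_le measurable_snd (hgmeas.comp measurable_fst)
    have hXrep : gaussianReal 0 ((σX ^ 2).toNNReal)
        = Measure.map (fun y => σX * y) (gaussianReal 0 1) := by
      rw [show (fun y : ℝ => σX * y) = (σX * ·) from rfl, gaussianReal_map_const_mul σX]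
      congr 1
      · ring
      · ext
        simp [Real.coe_toNNReal _ hσX2.le]
    rw [hset, ← Measure.map_apply hpairmeas hEmeas, hjoint, hεlaw, hXlaw]
    rw [show (gaussianReal 0 1 : Measure ℝ)
        = Measure.map id (gaussianReal 0 1) from (Measure.map_id).symm]
    rw [hXrep]
    rw [Measure.map_prod_map _ _ (measurable_const_mul σX) measurable_id]
    rw [Measure.map_apply ((measurable_const_mul σX).prodMap measurable_id) hEmeas]
    have hpre : Prod.map (fun y : ℝ => σX * y) (id : ℝ → ℝ) ⁻¹'
        {p : ℝ × ℝ | p.2 ≤ a * (x - p.1) / σc + q} = {p : ℝ × ℝ | k * p.1 + p.2 ≤ c} := by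
      ext p
      simp only [mem_preimage, Prod.map_fst, Prod.map_snd, id_eq, mem_setOf_eq]
      have hid : a * (x - σX * p.1) / σc + q = c - k * p.1 := by rw [hc, hk]; ring
      constructor <;> intro h
      · have := hid ▸ h; linarith
      · rw [hid]; linarith
    rw [hpre, gaussian_conv k c]
    have hσX2ne : σX ^ 2 ≠ 0 := ne_of_gt hσX2
    have hσcne : σc ≠ 0 := ne_of_gt hσcpos
    have hmul : σc ^ 2 * σX ^ 2 = σX ^ 2 - σUX ^ 2 := by
      rw [hσcsq]; field_simp
    have hvar : (1 + k ^ 2 : ℝ) = (1 / σc) ^ 2 := by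
      rw [hk, ha]
      field_simp
      nlinarith [hmul]
    have hvar' : ((1 + k ^ 2 : ℝ)).toNNReal = (((1 / σc : ℝ)) ^ 2).toNNReal := by
      rw [hvar]
    rw [hvar']
    have hrep2 : gaussianReal 0 (((1 / σc : ℝ)) ^ 2).toNNReal
        = Measure.map (fun y => (1 / σc) * y) (gaussianReal 0 1) := by
      rw [show (fun y : ℝ => (1 / σc) * y) = ((1 / σc) * ·) from rfl,
        gaussianReal_map_const_mul (1 / σc)]
      congr 1
      · ring
      · ext
        simp [Real.coe_toNNReal _ (sq_nonneg (1 / σc))]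
        positivity
    rw [hrep2, Measure.map_apply (measurable_const_mul _) measurableSet_Iic]
    have hpre2 : (fun y : ℝ => (1 / σc) * y) ⁻¹' Iic c = Iic (σc * c) := by
      ext y
      simp only [mem_preimage, mem_Iic]
      rw [one_div, inv_mul_le_iff₀ hσcpos]
    rw [hpre2]
    have hfin : σc * c = a * x + σc * q := by
      rw [hc]; field_simp
    rw [hfin, hΦ, ENNReal.ofReal_toReal (measure_ne_top _ _)]
end

section
/- Let m : ℝ^K → ℝ and π : ℝ^K → ℝ satisfy m(x) = x'β + g(π(x)) with g differentiable. Fix indices k, j and two points x, x̃ at which m and π are differentiable with ∂_kπ(x), ∂_jπ(x), ∂_kπ(x̃), ∂_jπ(x̃) all nonzero and ∂_kπ(x)/∂_jπ(x) ≠ ∂_kπ(x̃)/∂_jπ(x̃). Then the 2×2 linear system ∂_km(y)∂_jπ(y) − ∂_jm(y)∂_kπ(y) = ∂_jπ(y)β_k − ∂_kπ(y)β_j, for y ∈ {x, x̃}, has a nonsingular coefficient matrix, and hence β_k and β_j are uniquely determined by m and π. -/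
/-- Partial derivative of `f : ℝᴷ → ℝ` in the `k`-th coordinate direction. -/
noncomputable def pd {K : ℕ} (f : (Fin K → ℝ) → ℝ) (k : Fin K) (x : Fin K → ℝ) : ℝ :=
  fderiv ℝ f x (Pi.single k 1)

lemma pd_model {K : ℕ} (m pr : (Fin K → ℝ) → ℝ) (g : ℝ → ℝ) (β : Fin K → ℝ)
    (hg : Differentiable ℝ g)
    (hm : ∀ y, m y = (∑ i, y i * β i) + g (pr y))
    (i : Fin K) (y : Fin K → ℝ) (hd : DifferentiableAt ℝ pr y) :
    pd m i y = β i + deriv g (pr y) * pd pr i y := by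
  have hmf : m = fun y => (∑ i, y i * β i) + g (pr y) := funext hm
  set L : (Fin K → ℝ) →L[ℝ] ℝ := ∑ i, (β i) • (ContinuousLinearMap.proj i) with hLdef
  have hL : ∀ v : Fin K → ℝ, L v = ∑ i, v i * β i := by
    intro v
    simp [hLdef, ContinuousLinearMap.sum_apply, mul_comm]
  have hLfun : (fun y : Fin K → ℝ => ∑ i, y i * β i) = ⇑L := by
    funext v; rw [hL]
  have h1 : HasFDerivAt (fun y : Fin K → ℝ => ∑ i, y i * β i) L y := by
    rw [hLfun]; exact L.hasFDerivAt
  have hgd : HasFDerivAt g (fderiv ℝ g (pr y)) (pr y) := (hg (pr y)).hasFDerivAt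
  have h2 : HasFDerivAt (fun v => g (pr v))
      ((fderiv ℝ g (pr y)).comp (fderiv ℝ pr y)) y := hgd.comp y hd.hasFDerivAt
  have h3 : HasFDerivAt m (L + (fderiv ℝ g (pr y)).comp (fderiv ℝ pr y)) y := by
    rw [hmf]; exact h1.add h2
  have key : fderiv ℝ m y = L + (fderiv ℝ g (pr y)).comp (fderiv ℝ pr y) := h3.fderiv
  have happ : ∀ t : ℝ, fderiv ℝ g (pr y) t = t * deriv g (pr y) := by
    intro t
    have : fderiv ℝ g (pr y) t = fderiv ℝ g (pr y) (t • (1:ℝ)) := by simp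
    rw [this, (fderiv ℝ g (pr y)).map_smul, smul_eq_mul, fderiv_apply_one_eq_deriv]
  simp only [pd, key, ContinuousLinearMap.add_apply, ContinuousLinearMap.comp_apply, happ, hL]
  rw [Finset.sum_eq_single i]
  · simp [mul_comm]
  · intro b _ hb; simp [Pi.single_eq_of_ne hb]
  · intro h; exact absurd (Finset.mem_univ i) h

/-- In the partially linear model `m x = x'β + g (pr x)` with `g` differentiable,
fix indices `k, j` and points `x, xt` where `pr` is differentiable with
`∂ₖpr x, ∂ⱼpr x, ∂ₖpr xt, ∂ⱼpr xt` all nonzero and `∂ₖpr x/∂ⱼpr x ≠ ∂ₖpr xt/∂ⱼpr xt`.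
Then the 2×2 linear system `∂ₖm y·∂ⱼpr y − ∂ⱼm y·∂ₖpr y = ∂ⱼpr y·βₖ − ∂ₖpr y·βⱼ`
(for `y ∈ {x, xt}`) holds with nonsingular coefficient matrix; hence `βₖ` and `βⱼ` are
uniquely determined by `m` and `pr`. -/
theorem stmt14 {K : ℕ} (m pr : (Fin K → ℝ) → ℝ) (g : ℝ → ℝ) (β : Fin K → ℝ)
    (hg : Differentiable ℝ g)
    (hm : ∀ y, m y = (∑ i, y i * β i) + g (pr y))
    (k j : Fin K) (x xt : Fin K → ℝ)
    (hdx : DifferentiableAt ℝ pr x) (hdxt : DifferentiableAt ℝ pr xt)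
    (h1 : pd pr k x ≠ 0) (h2 : pd pr j x ≠ 0) (h3 : pd pr k xt ≠ 0) (h4 : pd pr j xt ≠ 0)
    (h5 : pd pr k x / pd pr j x ≠ pd pr k xt / pd pr j xt) :
    (∀ y ∈ ({x, xt} : Set (Fin K → ℝ)),
      pd m k y * pd pr j y - pd m j y * pd pr k y = pd pr j y * β k - pd pr k y * β j) ∧
    Matrix.det !![pd pr j x, -(pd pr k x); pd pr j xt, -(pd pr k xt)] ≠ 0 ∧
    (∀ (β' : Fin K → ℝ) (g' : ℝ → ℝ), Differentiable ℝ g' →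
      (∀ y, m y = (∑ i, y i * β' i) + g' (pr y)) → β' k = β k ∧ β' j = β j) := by
  have hprod : pd pr k x * pd pr j xt ≠ pd pr k xt * pd pr j x := by
    intro h
    exact h5 (by rw [div_eq_div_iff h2 h4]; exact h)
  refine ⟨?_, ?_, ?_⟩
  · intro y hy
    have hd : DifferentiableAt ℝ pr y := by
      rcases hy with rfl | hy
      · exact hdx
      · rw [Set.mem_singleton_iff] at hy; subst hy; exact hdxt
    rw [pd_model m pr g β hg hm k y hd, pd_model m pr g β hg hm j y hd]
    ring
  · simp only [Matrix.det_fin_two_of]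
    intro h
    apply hprod
    nlinarith [h]
  · intro β' g' hg' hm'
    have ekx := pd_model m pr g β hg hm k x hdx
    have ejx := pd_model m pr g β hg hm j x hdx
    have ekt := pd_model m pr g β hg hm k xt hdxt
    have ejt := pd_model m pr g β hg hm j xt hdxt
    have ekx' := pd_model m pr g' β' hg' hm' k x hdx
    have ejx' := pd_model m pr g' β' hg' hm' j x hdx
    have ekt' := pd_model m pr g' β' hg' hm' k xt hdxt
    have ejt' := pd_model m pr g' β' hg' hm' j xt hdxt
    set s : ℝ := deriv g' (pr x) - deriv g (pr x) with hs
    set t : ℝ := deriv g' (pr xt) - deriv g (pr xt) with ht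
    have hak : β k - β' k = s * pd pr k x := by
      linear_combination ekx' - ekx - pd pr k x * hs
    have haj : β j - β' j = s * pd pr j x := by
      linear_combination ejx' - ejx - pd pr j x * hs
    have hbk : β k - β' k = t * pd pr k xt := by
      linear_combination ekt' - ekt - pd pr k xt * ht
    have hbj : β j - β' j = t * pd pr j xt := by
      linear_combination ejt' - ejt - pd pr j xt * ht
    by_cases hs0 : s = 0
    · constructor
      · have := hak; rw [hs0] at this; linarith
      · have := haj; rw [hs0] at this; linarith
    · exfalso
      apply hprod
      have ht0 : t ≠ 0 := by
        intro ht0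
        rw [ht0, zero_mul] at hbk
        rw [hbk] at hak
        exact hs0 ((mul_eq_zero.mp hak.symm).resolve_right h1)
      have e1 : s * pd pr k x = t * pd pr k xt := by linarith
      have e2 : s * pd pr j x = t * pd pr j xt := by linarith
      have : s * (pd pr k x * pd pr j xt) = s * (pd pr k xt * pd pr j x) := by
        linear_combination pd pr j xt * e1 - pd pr k xt * e2
      exact mul_left_cancel₀ hs0 this
end
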